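/- arXiv:1209.6344 — 2 statements merged into one kernel-verified Lean document; each statement's English description precedes it below -/
import Mathlib

section
/- Let F : ℝ² → ℝ, let a_t, c_t > 0 and b_t, d_t ∈ ℝ be families of constants indexed by t ≥ 1, and let Φ₀ : ℝ² → ℝ satisfy Φ₀(0,0) > 0. Suppose that for every (x,y) ∈ ℝ², t·(1 − F(a_t x + b_t, c_t y + d_t)) → Φ₀(x,y) as t → ∞, and that 1 − F(b_t, d_t) > 0 for all large t. Then for every (x,y), the conditional exceedance distribution F_{b_t,d_t}(a_t x, c_t y) = (F(a_t x + b_t, c_t y + d_t) − F(b_t, d_t))/(1 − F(b_t, d_t)) converges, as t → ∞, to H(x,y) = 1 − Φ₀(x,y)/Φ₀(0,0). -/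
open Filter Topology

/-! Both tails `1 - F` decay like `1/t` with limits `Φ₀(x,y)` and `Φ₀(0,0) ≠ 0`, so their
ratio tends to `Φ₀(x,y)/Φ₀(0,0)`; the exceedance distribution is one minus this ratio. -/

lemma tendsto_div_of_tendsto_mul_atTop {f g : ℝ → ℝ} {L M : ℝ}
    (hf : Tendsto (fun t => t * f t) atTop (𝓝 L)) (hg : Tendsto (fun t => t * g t) atTop (𝓝 M))
    (hM : M ≠ 0) : Tendsto (fun t => f t / g t) atTop (𝓝 (L / M)) := by
  refine (hf.div hg hM).congr' ?_
  filter_upwards [eventually_ne_atTop 0] with t ht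
  exact mul_div_mul_left _ _ ht

lemma eventually_ne_zero_of_tendsto_mul_atTop {g : ℝ → ℝ} {M : ℝ}
    (hg : Tendsto (fun t => t * g t) atTop (𝓝 M)) (hM : M ≠ 0) : ∀ᶠ t in atTop, g t ≠ 0 :=
  (hg.eventually_ne hM).mono fun _ h => right_ne_zero_of_mul h

lemma tendsto_exceedance_of_tendsto_mul_one_sub {p q : ℝ → ℝ} {L M : ℝ}
    (hp : Tendsto (fun t => t * (1 - p t)) atTop (𝓝 L))
    (hq : Tendsto (fun t => t * (1 - q t)) atTop (𝓝 M)) (hM : M ≠ 0) :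
    Tendsto (fun t => (p t - q t) / (1 - q t)) atTop (𝓝 (1 - L / M)) := by
  refine (tendsto_const_nhds.sub (tendsto_div_of_tendsto_mul_atTop hp hq hM)).congr' ?_
  filter_upwards [eventually_ne_zero_of_tendsto_mul_atTop hq hM] with t hq_ne
  field_simp
  ring

theorem stmt_2_general (F : ℝ → ℝ → ℝ) (a b c d : ℝ → ℝ)
    (Φ₀ : ℝ → ℝ → ℝ) (hΦ₀ : 0 < Φ₀ 0 0)
    (hlim : ∀ x y : ℝ,
      Tendsto (fun t : ℝ => t * (1 - F (a t * x + b t) (c t * y + d t)))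
        atTop (nhds (Φ₀ x y))) :
    ∀ x y : ℝ,
      Tendsto (fun t : ℝ =>
          (F (b t + a t * x) (d t + c t * y) - F (b t) (d t)) / (1 - F (b t) (d t)))
        atTop (nhds (1 - Φ₀ x y / Φ₀ 0 0)) := by
  intro x y
  have hxy := hlim x y
  have h00 := hlim 0 0
  simp only [mul_zero, zero_add] at h00
  simp only [add_comm (a _ * x), add_comm (c _ * y)] at hxy
  exact tendsto_exceedance_of_tendsto_mul_one_sub hxy h00 hΦ₀.ne'

/-- If `t (1 - F(a_t x + b_t, c_t y + d_t)) → Φ₀(x,y)` for all `(x,y)`, with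
`Φ₀(0,0) > 0` and `1 - F(b_t, d_t) > 0` eventually, then the conditional exceedance
distribution `F_{b_t,d_t}(a_t x, c_t y)` converges to the bivariate generalized Pareto
limit `H(x,y) = 1 - Φ₀(x,y)/Φ₀(0,0)`. -/
theorem stmt_2 (F : ℝ → ℝ → ℝ) (a b c d : ℝ → ℝ)
    (ha : ∀ t, 0 < a t) (hc : ∀ t, 0 < c t)
    (Φ₀ : ℝ → ℝ → ℝ) (hΦ₀ : 0 < Φ₀ 0 0)
    (hlim : ∀ x y : ℝ,
      Tendsto (fun t : ℝ => t * (1 - F (a t * x + b t) (c t * y + d t)))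
        atTop (nhds (Φ₀ x y)))
    (hpos : ∀ᶠ t in atTop, 0 < 1 - F (b t) (d t)) :
    ∀ x y : ℝ,
      Tendsto (fun t : ℝ =>
          (F (b t + a t * x) (d t + c t * y) - F (b t) (d t)) / (1 - F (b t) (d t)))
        atTop (nhds (1 - Φ₀ x y / Φ₀ 0 0)) :=
  stmt_2_general F a b c d Φ₀ hΦ₀ hlim
end

section
/- The Schlather bivariate distribution is max-stable: for every ρ ∈ [−1,1], every c > 0 and all y₁, y₂ > 0, V^S_ρ(c·y₁, c·y₂) = V^S_ρ(y₁,y₂)/c, and consequently (exp(−V^S_ρ(c·y₁, c·y₂)))^c = exp(−V^S_ρ(y₁,y₂)), where the left side uses the real power with exponent c. -/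
open Filter

/-- Schlather bivariate exponent. -/
noncomputable def schlatherV (ρ y₁ y₂ : ℝ) : ℝ :=
  (1 / 2) * (1 / y₁ + 1 / y₂) *
    (1 + Real.sqrt (1 - 2 * (ρ + 1) * y₁ * y₂ / (y₁ + y₂) ^ 2))

/-! The square root depends on `(y₁, y₂)` only through the scale-free ratio
`y₁ y₂ / (y₁ + y₂)²`, so the exponent inherits the homogeneity of order `-1`
of its prefactor `1/y₁ + 1/y₂`; raising `exp (-V)` to the power `c` then undoes the
factor `1/c`. -/

lemma schlatherV_mul_mul (ρ : ℝ) {c : ℝ} (hc : c ≠ 0) (y₁ y₂ : ℝ) :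
    schlatherV ρ (c * y₁) (c * y₂) = schlatherV ρ y₁ y₂ / c := by
  have hratio : 2 * (ρ + 1) * (c * y₁) * (c * y₂) / (c * y₁ + c * y₂) ^ 2
      = 2 * (ρ + 1) * y₁ * y₂ / (y₁ + y₂) ^ 2 := by
    rw [← mul_add, mul_pow, show 2 * (ρ + 1) * (c * y₁) * (c * y₂)
      = c ^ 2 * (2 * (ρ + 1) * y₁ * y₂) by ring]
    exact mul_div_mul_left _ _ (pow_ne_zero 2 hc)
  rw [schlatherV, schlatherV, hratio]
  field_simp

lemma Real.exp_neg_div_rpow (x : ℝ) {c : ℝ} (hc : c ≠ 0) :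
    Real.exp (-(x / c)) ^ c = Real.exp (-x) := by
  rw [← Real.exp_mul, neg_mul, div_mul_cancel₀ x hc]

theorem stmt_7_general (ρ : ℝ) (c : ℝ) (hc : 0 < c)
    (y₁ y₂ : ℝ) :
    schlatherV ρ (c * y₁) (c * y₂) = schlatherV ρ y₁ y₂ / c
      ∧ Real.exp (-(schlatherV ρ (c * y₁) (c * y₂))) ^ c
          = Real.exp (-(schlatherV ρ y₁ y₂)) := by
  have hV := schlatherV_mul_mul ρ hc.ne' y₁ y₂
  exact ⟨hV, hV ▸ Real.exp_neg_div_rpow _ hc.ne'⟩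

/-- The Schlather bivariate distribution is max-stable: the exponent is homogeneous
of order `-1` and consequently `(exp(-V(c y₁, c y₂)))^c = exp(-V(y₁, y₂))`. -/
theorem stmt_7 (ρ : ℝ) (hρ : ρ ∈ Set.Icc (-1 : ℝ) 1) (c : ℝ) (hc : 0 < c)
    (y₁ y₂ : ℝ) (hy₁ : 0 < y₁) (hy₂ : 0 < y₂) :
    schlatherV ρ (c * y₁) (c * y₂) = schlatherV ρ y₁ y₂ / c
      ∧ Real.exp (-(schlatherV ρ (c * y₁) (c * y₂))) ^ c
          = Real.exp (-(schlatherV ρ y₁ y₂)) :=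
  stmt_7_general ρ c hc y₁ y₂
end
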